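/- Let X = {x₁,...,x_n} and let G be the reduced Gröbner basis of a homogeneous ideal in k⟨X⟩ such that lw(G) consists of Lyndon words. Then the set of normal words modulo G equals {u₁u₂⋯u_s : u₁ ≤_plex u₂ ≤_plex ⋯ ≤_plex u_s, each u_i ∈ 𝔏(G), s ≥ 1} ∪ {1}, where 𝔏(G) is the set of Lyndon words normal modulo G. -/

import Mathlib

/-!
Reversing the order of the letters turns `>_lex` into "smaller at a letter where the words
differ" and `≤_plex` into `≥` for the usual lexicographic order on lists, and the paper's Lyndon
words into the usual ones.

Every word is a nonincreasing product of Lyndon words (Chen–Fox–Lyndon): push the letters one at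
a time onto a factorization of the rest, merging `x ++ u` whenever `x < u`. The factors of a normal
word are normal. Conversely, a Lyndon factor `v` of a nonincreasing product of Lyndon words lies
inside one of them: were `v = s ++ z` to straddle a boundary, with `s` a suffix of the factor `u`,
then `u ≤ s ≤ v` bounds all later factors by `v`, which is incompatible with `v` being smaller
than its suffix `z`, a prefix of their product. As `lw(G)` consists of Lyndon words, a
nonincreasing product of normal Lyndon words is therefore normal.
-/

namespace NC

/-- The free associative algebra on the alphabet `X`, with the words (the free
monoid on `X`) as a basis. -/
abbrev FA (k X : Type) [Field k] := MonoidAlgebra k (FreeMonoid X)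

variable {k X : Type} [Field k]

/-- The monomial on a word `u` (with coefficient `1`). -/
noncomputable def mono (k : Type) [Field k] {X : Type} (u : FreeMonoid X) : FA k X :=
  MonoidAlgebra.of k (FreeMonoid X) u

/-- `u` is a factor of `v`. -/
def IsFactor (u v : FreeMonoid X) : Prop := ∃ w₁ w₂ : FreeMonoid X, w₁ * u * w₂ = v

/-- The leading word of a polynomial (junk value `1` for the zero polynomial). -/
noncomputable def lw [LinearOrder (FreeMonoid X)] (f : FA k X) : FreeMonoid X :=
  WithBot.unbotD 1 f.coeff.support.max

/-- The set of leading words of the nonzero members of `G`. -/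
def lwSet [LinearOrder (FreeMonoid X)] (G : Set (FA k X)) : Set (FreeMonoid X) :=
  {u | ∃ f ∈ G, f ≠ 0 ∧ lw f = u}

/-- The normal words modulo `G` : words having no factor among the leading words of `G`. -/
def nw [LinearOrder (FreeMonoid X)] (G : Set (FA k X)) : Set (FreeMonoid X) :=
  {u | ∀ v ∈ lwSet G, ¬ IsFactor v u}

/-- The two-sided ideal (as a `k`-submodule) generated by a set `S`. -/
noncomputable def ideal2 (k : Type) [Field k] {X : Type} (S : Set (FA k X)) : Submodule k (FA k X) :=
  Submodule.span k {x | ∃ a s b, s ∈ S ∧ x = a * s * b}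

/-- A `k`-submodule of the free algebra which is a two-sided ideal. -/
def IsTwoSided (𝔞 : Submodule k (FA k X)) : Prop :=
  ∀ a x : FA k X, x ∈ 𝔞 → a * x ∈ 𝔞 ∧ x * a ∈ 𝔞

/-- `G` is a Gröbner basis of the (two-sided) ideal `𝔞`. -/
def IsGrobner [LinearOrder (FreeMonoid X)] (𝔞 : Submodule k (FA k X))
    (G : Set (FA k X)) : Prop :=
  (∀ g ∈ G, g ∈ 𝔞) ∧ ∀ f ∈ 𝔞, f ≠ 0 → lw f ∉ nw G

/-- `G` is reduced: every member is monic and normal modulo the remaining members. -/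
def IsReducedGB [LinearOrder (FreeMonoid X)] (G : Set (FA k X)) : Prop :=
  ∀ f ∈ G, f.coeff (lw f) = 1 ∧ ∀ u ∈ f.coeff.support, u ∈ nw (G \ {f})

/-- The fixed linear order on words is admissible. -/
def IsAdmissible (X : Type) [LinearOrder (FreeMonoid X)] : Prop :=
  WellFoundedLT (FreeMonoid X) ∧ (∀ u : FreeMonoid X, u ≠ 1 → 1 < u) ∧
    ∀ u v w₁ w₂ : FreeMonoid X, u < v → w₁ * u * w₂ < w₁ * v * w₂

end NC

namespace NC2
open NC
variable {k X : Type} [Field k]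

/-- The (multi)degree of a word, for the grading determined by `e` on the letters. -/
def mdeg {σ : Type} [AddCommMonoid σ] (e : X → σ) (w : FreeMonoid X) : σ :=
  ((FreeMonoid.toList w).map e).sum

/-- `f` is homogeneous of degree `α`. -/
def IsHomog {σ : Type} [AddCommMonoid σ] (e : X → σ) (α : σ) (f : NC.FA k X) : Prop :=
  ∀ u ∈ f.coeff.support, mdeg e u = α

open Classical in
/-- The degree-`α` homogeneous component of `f`. -/
noncomputable def homComp {σ : Type} [AddCommMonoid σ] (e : X → σ) (α : σ) (f : NC.FA k X) :
    NC.FA k X :=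
  MonoidAlgebra.ofCoeff (Finsupp.filter (fun u => mdeg e u = α) f.coeff)

/-- A homogeneous (two-sided) ideal. -/
def IsHomogIdeal {σ : Type} [AddCommMonoid σ] (e : X → σ) (𝔞 : Submodule k (NC.FA k X)) : Prop :=
  NC.IsTwoSided 𝔞 ∧ ∀ f ∈ 𝔞, ∀ α : σ, homComp e α f ∈ 𝔞

/-- Polynomials supported on a given set of words. -/
noncomputable def wsupported (k : Type) [Field k] {X : Type} (S : Set (FreeMonoid X)) :
    Submodule k (NC.FA k X) :=
  MonoidAlgebra.supported k k S

/-- Dimension of the image, in the quotient by `𝔞`, of the span of the words in `S`. -/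
noncomputable def hilbS (𝔞 : Submodule k (NC.FA k X)) (S : Set (FreeMonoid X)) : ℕ :=
  Module.finrank k ↥((wsupported k S).map 𝔞.mkQ)

/-- The multigraded Hilbert function of the quotient algebra `k⟨X⟩/𝔞`. -/
noncomputable def hilb {σ : Type} [AddCommMonoid σ] (e : X → σ) (𝔞 : Submodule k (NC.FA k X))
    (α : σ) : ℕ :=
  hilbS 𝔞 {u | mdeg e u = α}

/-- The monomial ideal on a set of words. -/
noncomputable def monIdeal (k : Type) [Field k] {X : Type} (V : Set (FreeMonoid X)) :
    Submodule k (NC.FA k X) :=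
  NC.ideal2 k ((fun u => NC.mono k u) '' V)

/-- Partial sums of a Hilbert function. -/
def psum (H : ℕ → ℕ) (n : ℕ) : ℕ := ∑ i ∈ Finset.range (n + 1), H i

/-- The growth function is bounded by a polynomial of degree `d`. -/
def PolyBoundedBy (H : ℕ → ℕ) (d : ℕ) : Prop := ∃ C : ℕ, ∀ n, psum H n ≤ C * (n + 1) ^ d

/-- Polynomial growth (of some degree). -/
def PolyGrowth (H : ℕ → ℕ) : Prop := ∃ d, PolyBoundedBy H d

/-- Polynomial growth of degree exactly `d`. -/
def PolyGrowthDeg (H : ℕ → ℕ) (d : ℕ) : Prop :=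
  ∃ C : ℕ, 0 < C ∧ ∀ n, psum H n ≤ C * (n + 1) ^ d ∧ (n + 1) ^ d ≤ C * psum H n

/-- Gelfand-Kirillov dimension of a graded algebra with Hilbert function `H`, as an
extended natural number. -/
noncomputable def gkdimH (H : ℕ → ℕ) : ℕ∞ :=
  sInf ((fun d : ℕ => (d : ℕ∞)) '' {d | PolyBoundedBy H d})

end NC2

namespace NC4
open NC
variable {N : ℕ}

/-- The lexicographic comparison `u >_lex v` on words over the ordered alphabet `Fin N`
(with `x_i > x_j` iff `i > j`). -/
def LexGt (u v : FreeMonoid (Fin N)) : Prop :=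
  ∃ (r s t : FreeMonoid (Fin N)) (i j : Fin N), j < i ∧
    u = r * FreeMonoid.of i * s ∧ v = r * FreeMonoid.of j * t

/-- Lyndon words: nonempty words `u` with `u >_lex w*v` for every nontrivial
factorization `u = v*w`. -/
def IsLyndon (u : FreeMonoid (Fin N)) : Prop :=
  u ≠ 1 ∧ ∀ v w : FreeMonoid (Fin N), v ≠ 1 → w ≠ 1 → u = v * w → LexGt u (w * v)

/-- The plex comparison `u >_plex v`: `u` is a proper prefix of `v`, or `u >_lex v`. -/
def PlexGt (u v : FreeMonoid (Fin N)) : Prop :=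
  (∃ w : FreeMonoid (Fin N), w ≠ 1 ∧ v = u * w) ∨ LexGt u v

/-- `u ≤_plex v`. -/
def PlexLe (u v : FreeMonoid (Fin N)) : Prop := u = v ∨ PlexGt v u

variable {k : Type} [Field k]

/-- `𝔏(G)`: the set of Lyndon words which are normal modulo `G`. -/
def LyndonNormal [LinearOrder (FreeMonoid (Fin N))] (G : Set (NC.FA k (Fin N))) :
    Set (FreeMonoid (Fin N)) :=
  {u | IsLyndon u ∧ u ∈ NC.nw G}

end NC4

namespace List

variable {α : Type*} [LinearOrder α]

theorem append_lt_append_left_iff {p u v : List α} : p ++ u < p ++ v ↔ u < v := by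
  induction p with
  | nil => rfl
  | cons a p ih => simpa [cons_lt_cons_iff] using ih

-- Core's `IsPrefix.le` is about core's `≤` on lists, not the one of Mathlib's `LinearOrder`.
theorem le_of_isPrefix {u v : List α} (h : u <+: v) : u ≤ v := not_lt.mp h.le

/-- `u < v` is decided at a letter where the two words differ, not by `u` being a prefix
of `v`; this is the paper's `>_lex` (for the reversed order on letters). -/
def DiffLt (u v : List α) : Prop := ∀ x y : List α, u ++ x < v ++ y

namespace DiffLt

variable {u v w : List α}

theorem lt (h : DiffLt u v) : u < v := by simpa using h [] []

theorem append (h : DiffLt u v) (a b : List α) : DiffLt (u ++ a) (v ++ b) :=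
  fun x y => by simpa only [append_assoc] using h (a ++ x) (b ++ y)

theorem trans (huv : DiffLt u v) (hvw : DiffLt v w) : DiffLt u w :=
  fun x y => (huv x []).trans (hvw [] y)

theorem of_append_left {p : List α} (h : DiffLt (p ++ u) (p ++ v)) : DiffLt u v :=
  fun x y => append_lt_append_left_iff.mp (by simpa only [append_assoc] using h x y)

theorem not_isPrefix (h : DiffLt u v) : ¬ u <+: v := by
  rintro ⟨t, rfl⟩
  exact lt_irrefl (u ++ t) (by simpa using h t [])

theorem irrefl (u : List α) : ¬ DiffLt u u := fun h => h.not_isPrefix (prefix_refl u)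

end DiffLt

theorem diffLt_of_lt_of_not_isPrefix {u v : List α} (h : u < v) (hp : ¬ u <+: v) :
    DiffLt u v := by
  induction u generalizing v with
  | nil => exact absurd nil_prefix hp
  | cons a u ih =>
    cases v with
    | nil => exact absurd h (not_lt_nil _)
    | cons b v =>
      rcases cons_lt_cons_iff.mp h with hab | ⟨rfl, huv⟩
      · exact fun x y => cons_lt_cons_iff.mpr (Or.inl hab)
      · have := ih huv fun hp' => hp (cons_prefix_cons.mpr ⟨rfl, hp'⟩)
        exact fun x y => cons_lt_cons_iff.mpr (Or.inr ⟨rfl, this x y⟩)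

theorem diffLt_of_lt_of_length_le {u v : List α} (h : u < v) (hl : v.length ≤ u.length) :
    DiffLt u v :=
  diffLt_of_lt_of_not_isPrefix h fun hp => h.ne (hp.eq_of_length (le_antisymm hp.length_le hl))

theorem diffLt_iff_exists {u v : List α} :
    DiffLt u v ↔ ∃ (r : List α) (a : α) (s : List α) (b : α) (t : List α),
      a < b ∧ u = r ++ a :: s ∧ v = r ++ b :: t := by
  constructor
  · intro h
    induction u generalizing v with
    | nil => exact absurd nil_prefix h.not_isPrefix
    | cons a u ih =>
      cases v with
      | nil => exact absurd h.lt (not_lt_nil _)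
      | cons b v =>
        rcases cons_lt_cons_iff.mp h.lt with hab | ⟨rfl, -⟩
        · exact ⟨[], a, u, b, v, hab, rfl, rfl⟩
        · obtain ⟨r, a', s, b', t, hab, rfl, rfl⟩ := ih (h.of_append_left (p := [a]))
          exact ⟨a :: r, a', s, b', t, hab, rfl, rfl⟩
  · rintro ⟨r, a, s, b, t, hab, rfl, rfl⟩ x y
    simpa using append_left_lt (cons_lt_cons_iff.mpr (Or.inl hab))

def IsLyndon (w : List α) : Prop :=
  w ≠ [] ∧ ∀ p s : List α, p ≠ [] → s ≠ [] → w = p ++ s → w < s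

theorem isLyndon_singleton (a : α) : IsLyndon [a] := by
  refine ⟨cons_ne_nil a [], fun p s hp hs h => ?_⟩
  rcases append_eq_singleton_iff.mp h.symm with ⟨rfl, -⟩ | ⟨-, rfl⟩ <;> contradiction

namespace IsLyndon

variable {w u v : List α}

theorem diffLt_of_eq_append (hw : IsLyndon w) {p s : List α} (hp : p ≠ []) (hs : s ≠ [])
    (h : w = p ++ s) : DiffLt w s :=
  diffLt_of_lt_of_length_le (hw.2 p s hp hs h) (by simp [h])

theorem le_of_eq_append (hw : IsLyndon w) {p s : List α} (hs : s ≠ []) (h : w = p ++ s) :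
    w ≤ s := by
  rcases eq_or_ne p [] with rfl | hp
  · exact (nil_append s ▸ h).le
  · exact (hw.2 p s hp hs h).le

theorem append (hu : IsLyndon u) (hv : IsLyndon v) (h : u < v) : IsLyndon (u ++ v) := by
  have huv : u ++ v < v := by
    by_cases hp : u <+: v
    · obtain ⟨t, rfl⟩ := hp
      have ht : t ≠ [] := by rintro rfl; simp at h
      exact append_left_lt (hv.2 u t hu.1 ht rfl)
    · simpa using diffLt_of_lt_of_not_isPrefix h hp v []
  refine ⟨by simp [hu.1], fun p s hp hs hps => ?_⟩
  rcases append_eq_append_iff.mp hps with ⟨a, rfl, hv'⟩ | ⟨c, hu', rfl⟩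
  · exact huv.trans_le (hv.le_of_eq_append hs hv')
  · rcases eq_or_ne c [] with rfl | hc
    · simpa using huv
    · exact ((hu.diffLt_of_eq_append hp hc hu').append v v).lt

theorem not_diffLt_of_isPrefix_flatten (hv : IsLyndon v) {t : List (List α)}
    (ht : ∀ u ∈ t, IsLyndon u ∧ u ≤ v) {z : List α} (hz : z <+: t.flatten) :
    ¬ DiffLt v z := by
  induction t generalizing z with
  | nil =>
    obtain rfl : z = [] := by simpa using hz
    exact fun h => not_lt_nil v h.lt
  | cons u t ih =>
    rw [forall_mem_cons] at ht
    obtain ⟨⟨hu, huv⟩, ht⟩ := ht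
    intro hvz
    rw [flatten_cons] at hz
    rcases prefix_or_prefix_of_prefix hz (prefix_append u t.flatten) with hzu | ⟨z', rfl⟩
    · exact lt_irrefl v (hvz.lt.trans_le ((le_of_isPrefix hzu).trans huv))
    by_cases hpre : u <+: v
    · obtain ⟨v', rfl⟩ := hpre
      have hvz' : DiffLt v' z' := hvz.of_append_left
      have hv' : v' ≠ [] := by rintro rfl; exact hvz'.not_isPrefix nil_prefix
      exact ih ht ((prefix_append_right_inj u).mp hz)
        ((hv.diffLt_of_eq_append hu.1 hv' rfl).trans hvz')
    · have hlt : u < v := huv.lt_of_ne fun h => hpre (h ▸ prefix_refl u)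
      exact lt_asymm hvz.lt (by simpa using diffLt_of_lt_of_not_isPrefix hlt hpre z' [])

theorem exists_isInfix_of_isInfix_flatten (hv : IsLyndon v) {l : List (List α)}
    (hl : ∀ u ∈ l, IsLyndon u) (hc : l.IsChain (· ≥ ·)) (h : v <:+: l.flatten) :
    ∃ u ∈ l, v <:+: u := by
  induction l with
  | nil => exact absurd (eq_nil_of_infix_nil h) hv.1
  | cons u t ih =>
    rw [forall_mem_cons] at hl
    rw [flatten_cons, infix_append_iff_ne_nil] at h
    rcases h with h | h | ⟨s, z, hs, hz, rfl, ⟨p, rfl⟩, hzt⟩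
    · exact ⟨u, mem_cons_self, h⟩
    · obtain ⟨u', hu', h⟩ := ih hl.2 hc.tail h
      exact ⟨u', mem_cons_of_mem u hu', h⟩
    · have hus : p ++ s ≤ s ++ z :=
        (hl.1.le_of_eq_append hs rfl).trans (le_of_isPrefix (prefix_append s z))
      have hle : ∀ u' ∈ t, IsLyndon u' ∧ u' ≤ s ++ z := fun u' hu' =>
        ⟨hl.2 u' hu', le_trans ((pairwise_cons.mp (isChain_iff_pairwise.mp hc)).1 u' hu') hus⟩
      exact (hv.not_diffLt_of_isPrefix_flatten hle hzt (hv.diffLt_of_eq_append hs hz rfl)).elim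

end IsLyndon

theorem isLyndon_iff_diffLt_rotate {w : List α} : IsLyndon w ↔
    w ≠ [] ∧ ∀ p s : List α, p ≠ [] → s ≠ [] → w = p ++ s → DiffLt w (s ++ p) := by
  refine ⟨fun hw => ⟨hw.1, fun p s hp hs h => ?_⟩,
    fun ⟨hne, h⟩ => ⟨hne, fun p s hp hs hps => ?_⟩⟩
  · simpa using (hw.diffLt_of_eq_append hp hs h).append [] p
  by_contra hsw
  have hrot := h p s hp hs hps
  by_cases hpre : s <+: w
  · obtain ⟨t, hst⟩ := hpre
    have ht : t ≠ [] := by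
      rintro rfl
      have := congrArg length (hps.symm.trans (append_nil s ▸ hst).symm)
      exact hp (by simpa using this)
    have htp : DiffLt t p := (hst ▸ hrot : DiffLt (s ++ t) (s ++ p)).of_append_left
    exact DiffLt.irrefl w ((h s t hs ht hst.symm).trans (hps ▸ htp.append s s))
  · have hlt : s < w := (not_lt.mp hsw).lt_of_ne fun h => hpre (h ▸ prefix_refl s)
    exact lt_asymm hrot.lt (by simpa using diffLt_of_lt_of_not_isPrefix hlt hpre p [])

theorem exists_lyndon_factorization_append {x : List α} (hx : IsLyndon x) {l : List (List α)}
    (hl : ∀ u ∈ l, IsLyndon u) (hc : l.IsChain (· ≥ ·)) :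
    ∃ m : List (List α), (∀ u ∈ m, IsLyndon u) ∧ m.IsChain (· ≥ ·) ∧
      m.flatten = x ++ l.flatten := by
  induction l generalizing x with
  | nil => exact ⟨[x], by simpa using hx, isChain_singleton x, by simp⟩
  | cons u l ih =>
    rw [forall_mem_cons] at hl
    by_cases hxu : x < u
    · obtain ⟨m, hm, hmc, hmf⟩ := ih (hx.append hl.1 hxu) hl.2 hc.tail
      exact ⟨m, hm, hmc, by simp [hmf]⟩
    · exact ⟨x :: u :: l, forall_mem_cons.mpr ⟨hx, forall_mem_cons.mpr hl⟩,
        hc.cons_cons (not_lt.mp hxu), rfl⟩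

theorem exists_lyndon_factorization (w : List α) :
    ∃ m : List (List α), (∀ u ∈ m, IsLyndon u) ∧ m.IsChain (· ≥ ·) ∧
      m.flatten = w := by
  induction w with
  | nil => exact ⟨[], by simp, isChain_nil, rfl⟩
  | cons a w ih =>
    obtain ⟨m, hm, hmc, rfl⟩ := ih
    exact exists_lyndon_factorization_append (isLyndon_singleton a) hm hmc

end List

namespace NC4

open OrderDual

variable {N : ℕ}

def toDualList : FreeMonoid (Fin N) ≃ List (Fin N)ᵒᵈ :=
  FreeMonoid.toList.trans (Equiv.listEquivOfEquiv toDual)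

@[simp] theorem toDualList_mul (u v : FreeMonoid (Fin N)) :
    toDualList (u * v) = toDualList u ++ toDualList v := by
  simp [toDualList, Equiv.listEquivOfEquiv]

@[simp] theorem toDualList_of (i : Fin N) : toDualList (FreeMonoid.of i) = [toDual i] := by
  simp [toDualList, Equiv.listEquivOfEquiv]

@[simp] theorem toDualList_one : toDualList (1 : FreeMonoid (Fin N)) = [] := rfl

@[simp] theorem toDualList_eq_nil {u : FreeMonoid (Fin N)} : toDualList u = [] ↔ u = 1 := by
  rw [← toDualList_one, toDualList.apply_eq_iff_eq]

theorem toDualList_prod (l : List (FreeMonoid (Fin N))) :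
    toDualList l.prod = (l.map toDualList).flatten := by
  induction l with
  | nil => rfl
  | cons u l ih => simp [ih]

theorem lexGt_iff_diffLt {u v : FreeMonoid (Fin N)} :
    LexGt u v ↔ List.DiffLt (toDualList u) (toDualList v) := by
  rw [List.diffLt_iff_exists]
  constructor
  · rintro ⟨r, s, t, i, j, hji, rfl, rfl⟩
    exact ⟨toDualList r, toDual i, toDualList s, toDual j, toDualList t, hji, by simp, by simp⟩
  · rintro ⟨r, a, s, b, t, hab, hu, hv⟩
    refine ⟨toDualList.symm r, toDualList.symm s, toDualList.symm t, ofDual a, ofDual b, hab,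
      toDualList.injective ?_, toDualList.injective ?_⟩ <;> simp [hu, hv]

theorem isLyndon_iff {u : FreeMonoid (Fin N)} : IsLyndon u ↔ List.IsLyndon (toDualList u) := by
  rw [List.isLyndon_iff_diffLt_rotate, IsLyndon, Ne, Ne, toDualList_eq_nil]
  refine and_congr_right fun _ => Equiv.forall₂_congr toDualList toDualList fun {x y} => ?_
  simp only [lexGt_iff_diffLt, toDualList_mul, Ne, toDualList_eq_nil]
  rw [← toDualList_mul x y, toDualList.apply_eq_iff_eq]

theorem plexLe_iff {u v : FreeMonoid (Fin N)} : PlexLe u v ↔ toDualList v ≤ toDualList u := by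
  constructor
  · rintro (rfl | ⟨w, -, rfl⟩ | h)
    · exact le_rfl
    · simpa using List.le_of_isPrefix (List.prefix_append (toDualList v) (toDualList w))
    · exact (lexGt_iff_diffLt.mp h).lt.le
  · intro h
    rcases h.eq_or_lt with h | h
    · exact Or.inl (toDualList.injective h).symm
    by_cases hpre : toDualList v <+: toDualList u
    · obtain ⟨t, ht⟩ := hpre
      have ht0 : t ≠ [] := by rintro rfl; simp [← ht] at h
      exact Or.inr (Or.inl ⟨toDualList.symm t, by simpa [← toDualList_eq_nil] using ht0,
        toDualList.injective (by simp [ht])⟩)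
    · exact Or.inr (Or.inr (lexGt_iff_diffLt.mpr (List.diffLt_of_lt_of_not_isPrefix h hpre)))

theorem isFactor_iff {u v : FreeMonoid (Fin N)} :
    NC.IsFactor u v ↔ toDualList u <:+: toDualList v := by
  constructor
  · rintro ⟨a, b, rfl⟩
    exact ⟨toDualList a, toDualList b, by simp⟩
  · rintro ⟨s, t, h⟩
    exact ⟨toDualList.symm s, toDualList.symm t, toDualList.injective (by simp [h])⟩

variable {k : Type} [Field k] [LinearOrder (FreeMonoid (Fin N))] {G : Set (NC.FA k (Fin N))}

theorem exists_lyndonNormal_factorization {w : FreeMonoid (Fin N)} (hw : w ∈ NC.nw G) :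
    ∃ l : List (FreeMonoid (Fin N)),
      (∀ u ∈ l, u ∈ LyndonNormal G) ∧ l.IsChain PlexLe ∧ l.prod = w := by
  obtain ⟨m, hm, hmc, hmw⟩ := List.exists_lyndon_factorization (toDualList w)
  refine ⟨m.map toDualList.symm, List.forall_mem_map.mpr fun x hx => ⟨?_, fun v hv hvx => ?_⟩,
    ?_, toDualList.injective ?_⟩
  · simpa [isLyndon_iff] using hm x hx
  · refine hw v hv (isFactor_iff.mpr ?_)
    rw [← hmw]
    exact (by simpa using isFactor_iff.mp hvx : toDualList v <:+: x).trans
      (List.infix_of_mem_flatten hx)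
  · refine List.isChain_map_of_isChain _ (fun a b hab => ?_) hmc
    simpa [plexLe_iff] using hab
  · simp [toDualList_prod, hmw]

theorem prod_mem_nw (hLyn : ∀ u ∈ NC.lwSet G, IsLyndon u) {l : List (FreeMonoid (Fin N))}
    (hl : ∀ u ∈ l, u ∈ LyndonNormal G) (hc : l.IsChain PlexLe) : l.prod ∈ NC.nw G := by
  intro v hv hvl
  rw [isFactor_iff, toDualList_prod] at hvl
  obtain ⟨x, hx, hvx⟩ := (isLyndon_iff.mp (hLyn v hv)).exists_isInfix_of_isInfix_flatten
    (List.forall_mem_map.mpr fun u hu => isLyndon_iff.mp (hl u hu).1)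
    (List.isChain_map_of_isChain toDualList (S := (· ≥ ·)) (fun _ _ => plexLe_iff.mp) hc) hvl
  obtain ⟨u, hu, rfl⟩ := List.mem_map.mp hx
  exact (hl u hu).2 v hv (isFactor_iff.mpr hvx)

end NC4

theorem stmt_6_general (k : Type) [Field k] (N : ℕ) [LinearOrder (FreeMonoid (Fin N))]
    (G : Set (NC.FA k (Fin N)))
    (hLyn : ∀ u ∈ NC.lwSet G, NC4.IsLyndon u) :
    NC.nw G =
      {w | ∃ l : List (FreeMonoid (Fin N)), l ≠ [] ∧
        (∀ u ∈ l, u ∈ NC4.LyndonNormal G) ∧ List.Chain' NC4.PlexLe l ∧ l.prod = w} ∪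
      {1} := by
  ext w
  constructor
  · intro hw
    obtain ⟨l, hl, hc, rfl⟩ := NC4.exists_lyndonNormal_factorization hw
    rcases eq_or_ne l [] with rfl | hne
    · exact Or.inr rfl
    · exact Or.inl ⟨l, hne, hl, hc, rfl⟩
  · rintro (⟨l, -, hl, hc, rfl⟩ | rfl)
    · exact NC4.prod_mem_nw hLyn hl hc
    · exact NC4.prod_mem_nw hLyn (l := []) (by simp) List.isChain_nil

/-- if the obstructions `lw(G)` of the reduced Gröbner basis `G` of a
homogeneous ideal of `k⟨x₁,…,x_N⟩` consist of Lyndon words, then the normal words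
modulo `G` are exactly the products `u₁u₂⋯u_s` of `≤_plex`-nondecreasing sequences of
Lyndon words normal modulo `G`, together with the empty word. -/
theorem stmt_6 (k : Type) [Field k] (N : ℕ) [LinearOrder (FreeMonoid (Fin N))]
    (hadm : NC.IsAdmissible (Fin N)) (e : Fin N → ℕ) (he : ∀ x, 0 < e x)
    (𝔞 : Submodule k (NC.FA k (Fin N))) (hh : NC2.IsHomogIdeal e 𝔞)
    (G : Set (NC.FA k (Fin N))) (hGB : NC.IsGrobner 𝔞 G) (hred : NC.IsReducedGB G)
    (hLyn : ∀ u ∈ NC.lwSet G, NC4.IsLyndon u) :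
    NC.nw G =
      {w | ∃ l : List (FreeMonoid (Fin N)), l ≠ [] ∧
        (∀ u ∈ l, u ∈ NC4.LyndonNormal G) ∧ List.Chain' NC4.PlexLe l ∧ l.prod = w} ∪
      {1} :=
  stmt_6_general k N G hLyn
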